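/- Nullity forbids small robustness bound: there is no constant a > 0 such that ν(ψ) ≤ a·ℛ(ψ) holds for every pure n-qubit state ψ and every n, where ν is the stabilizer nullity and ℛ the log-robustness of magic. Concretely: for every a there exist states with ν(ψ) = n but ℛ(ψ) = O(polylog n), e.g. subset phase states of subexponential subset size. -/

import Mathlib

open scoped BigOperators
open ComplexConjugate
open scoped ComplexOrder

noncomputable def traceNorm {ι : Type*} [Fintype ι] [DecidableEq ι] (A : Matrix ι ι ℂ) : ℝ :=
  (((Matrix.posSemidef_conjTranspose_mul_self A).1.eigenvectorUnitary : Matrix ι ι ℂ) *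
      Matrix.diagonal (((↑) : ℝ → ℂ) ∘ Real.sqrt ∘ (Matrix.posSemidef_conjTranspose_mul_self A).1.eigenvalues) *
      (star ((Matrix.posSemidef_conjTranspose_mul_self A).1.eigenvectorUnitary : Matrix ι ι ℂ))).trace.re

noncomputable def proj {ι : Type*} (v : ι → ℂ) : Matrix ι ι ℂ :=
  Matrix.of fun i j => v i * conj (v j)

noncomputable def tensorPow {ι : Type*} (A : Matrix ι ι ℂ) (t : ℕ) :
    Matrix (Fin t → ι) (Fin t → ι) ℂ :=
  Matrix.of fun x y => ∏ i, A (x i) (y i)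

noncomputable def pauli {n : ℕ} (a b : Fin n → ZMod 2) :
    Matrix (Fin n → ZMod 2) (Fin n → ZMod 2) ℂ :=
  Matrix.of fun x y =>
    if x = y + a then
      Complex.I ^ (∑ i, (a i * b i).val) * (-1 : ℂ) ^ (∑ i, (b i * y i).val)
    else 0

noncomputable def xi {n : ℕ} (ρ : Matrix (Fin n → ZMod 2) (Fin n → ZMod 2) ℂ)
    (p : (Fin n → ZMod 2) × (Fin n → ZMod 2)) : ℝ :=
  Complex.normSq ((pauli p.1 p.2 * ρ).trace) / 2 ^ n

/-- A unit vector represents a pure stabilizer state iff its stabilizer group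
G_ψ = {P : tr(Pψ) = ±1} has the maximal size 2^n. -/
def IsStabVec {n : ℕ} (u : (Fin n → ZMod 2) → ℂ) : Prop :=
  {p : (Fin n → ZMod 2) × (Fin n → ZMod 2) |
      Complex.normSq ((pauli p.1 p.2 * proj u).trace) = 1}.ncard = 2 ^ n

/-- A matrix is a pure stabilizer state if it is the projector onto a stabilizer vector. -/
def IsStabState {n : ℕ} (ρ : Matrix (Fin n → ZMod 2) (Fin n → ZMod 2) ℂ) : Prop :=
  ∃ u : (Fin n → ZMod 2) → ℂ,
    (∑ x, Complex.normSq (u x) = 1) ∧ ρ = proj u ∧ IsStabVec u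

/-- Log-robustness of magic: log₂ of the least ℓ¹-norm of coefficients in a real
decomposition into pure stabilizer states. -/
noncomputable def logRob {n : ℕ}
    (ρ : Matrix (Fin n → ZMod 2) (Fin n → ZMod 2) ℂ) : ℝ :=
  Real.logb 2 (sInf {t : ℝ | ∃ (m : ℕ) (c : Fin m → ℝ)
    (σ : Fin m → Matrix (Fin n → ZMod 2) (Fin n → ZMod 2) ℂ),
      (∀ i, IsStabState (σ i)) ∧ ρ = ∑ i, (c i : ℂ) • σ i ∧ t = ∑ i, |c i|})

/-- Stabilizer nullity ν(ψ) = n − log₂|G_ψ|. -/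
noncomputable def nullity {n : ℕ} (u : (Fin n → ZMod 2) → ℂ) : ℝ :=
  n - Real.logb 2
    (({p : (Fin n → ZMod 2) × (Fin n → ZMod 2) |
        Complex.normSq ((pauli p.1 p.2 * proj u).trace) = 1}.ncard : ℝ))

/-!
Take the subset state `ψ` on `S = {0, e₁, …, eₙ} ⊆ 𝔽₂ⁿ`. For `n ≥ 2` the identity is the only
Pauli operator with `|tr(Pψ)| = 1`: a nonzero shift `a` moves some point of `S` out of `S`, and a
nonzero phase `b` makes the amplitudes at `0` and at some `eⱼ` cancel, so in both cases the triangle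
inequality bounds `|tr(Pψ)|` by `n / (n + 1)`. Hence `ν(ψ) = n`. On the other hand
`|x⟩⟨y| + |y⟩⟨x| = 2 |φ⟩⟨φ| - |x⟩⟨x| - |y⟩⟨y|` with the stabilizer state `φ = (|x⟩ + |y⟩)/√2`,
which writes `ψ` as a combination of stabilizer states with `ℓ¹`-norm `2|S| - 3`, so
`ℛ(ψ) ≤ log₂(2n - 1)`. As `log n = o(n)`, no constant `a` gives `n ≤ a log₂(2n - 1)` for all `n`.
-/

namespace Magic

open Complex Finset Matrix

abbrev V (n : ℕ) := Fin n → ZMod 2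

def sgn (t : ZMod 2) : ℂ := (-1) ^ t.val

@[simp] lemma sgn_zero : sgn 0 = 1 := pow_zero _

@[simp] lemma sgn_one : sgn 1 = -1 := by simp [sgn, ZMod.val_one]

lemma normSq_sgn_mul (t : ZMod 2) (z : ℂ) : normSq (sgn t * z) = normSq z := by
  simp [sgn]

lemma zmod_two_cases (t : ZMod 2) : t = 0 ∨ t = 1 := by decide +revert

lemma normSq_half_mul_sgn_add (s t : ZMod 2) :
    normSq (2⁻¹ * (sgn s + sgn t)) = if s + t = 0 then 1 else 0 := by
  rcases zmod_two_cases s with rfl | rfl <;> rcases zmod_two_cases t with rfl | rfl <;>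
    simp [show (1 : ZMod 2) + 1 = 0 from rfl] <;> norm_num

lemma neg_one_pow_sum_val {ι : Type*} [Fintype ι] (f : ι → ZMod 2) :
    (-1 : ℂ) ^ (∑ i, (f i).val) = sgn (∑ i, f i) := by
  rw [sgn, neg_one_pow_eq_pow_mod_two, ← ZMod.val_natCast, Nat.cast_sum]
  simp only [ZMod.natCast_val, ZMod.cast_id', id]

variable {n : ℕ}

lemma add_eq_iff_eq_add {x a y : V n} : x + a = y ↔ a = x + y := by
  rw [← eq_neg_add_iff_add_eq, show -x = x from funext fun i => ZMod.neg_eq_self_mod_two (x i)]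

lemma add_ne_zero_of_ne {x y : V n} (hxy : x ≠ y) : x + y ≠ 0 :=
  fun h => hxy (by simpa using (add_eq_iff_eq_add.mp h).symm)

lemma two_mul_card_ker_dotProduct {d : V n} (hd : d ≠ 0) :
    2 * Nat.card {b : V n // b ⬝ᵥ d = 0} = 2 ^ n := by
  let f : V n →+ ZMod 2 := AddMonoidHom.mk' (· ⬝ᵥ d) fun b c => add_dotProduct b c d
  have hf : Function.Surjective f := by
    obtain ⟨i, hi⟩ := Function.ne_iff.mp hd
    refine fun t => ⟨Pi.single i t, ?_⟩
    simp [f, single_dotProduct, (zmod_two_cases _).resolve_left hi]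
  have := f.ker.card_mul_index
  rw [AddSubgroup.index_ker, AddMonoidHom.range_eq_top.mpr hf, AddSubgroup.card_top,
    Nat.card_zmod, mul_comm] at this
  exact this.trans (by simp)

lemma trace_pauli_mul_proj (a b : V n) (u : V n → ℂ) :
    (pauli a b * proj u).trace =
      I ^ (∑ i, (a i * b i).val) * ∑ w, sgn (b ⬝ᵥ w) * (u w * conj (u (w + a))) := by
  simp only [Matrix.trace, Matrix.diag, Matrix.mul_apply, pauli, proj, Matrix.of_apply, ite_mul,
    zero_mul]
  rw [Finset.sum_comm, Finset.mul_sum]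
  refine Finset.sum_congr rfl fun w _ => ?_
  rw [Finset.sum_ite_eq', if_pos (mem_univ _), neg_one_pow_sum_val, dotProduct]
  ring

def stabSet (u : V n → ℂ) : Set (V n × V n) :=
  {p | normSq ((pauli p.1 p.2 * proj u).trace) = 1}

lemma mem_stabSet {u : V n → ℂ} {a b : V n} :
    (a, b) ∈ stabSet u ↔ normSq (∑ w, sgn (b ⬝ᵥ w) * (u w * conj (u (w + a)))) = 1 := by
  rw [stabSet, Set.mem_ofPred_eq, trace_pauli_mul_proj, map_mul, map_pow, normSq_I, one_pow,
    one_mul]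

lemma zero_mem_stabSet {u : V n → ℂ} (hu : ∑ x, normSq (u x) = 1) : (0, 0) ∈ stabSet u := by
  simp only [mem_stabSet, zero_dotProduct, sgn_zero, one_mul, add_zero, mul_conj, ← ofReal_sum,
    hu, ofReal_one, map_one]

section Vectors

variable {ι : Type*} [DecidableEq ι]

noncomputable def pairVec (x y : ι) : ι → ℂ :=
  ((√2 : ℝ) : ℂ)⁻¹ • (Pi.single x 1 + Pi.single y 1)

noncomputable def subsetState (S : Finset ι) : ι → ℂ :=
  fun z => if z ∈ S then ((√(#S : ℝ) : ℝ) : ℂ)⁻¹ else 0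

lemma ofReal_inv_sqrt_mul_self {r : ℝ} (hr : 0 ≤ r) :
    ((√r : ℝ) : ℂ)⁻¹ * ((√r : ℝ) : ℂ)⁻¹ = (r : ℂ)⁻¹ := by
  rw [← mul_inv, ← ofReal_mul, Real.mul_self_sqrt hr]

lemma sum_normSq_single [Fintype ι] (x : ι) : ∑ z, normSq ((Pi.single x 1 : ι → ℂ) z) = 1 := by
  rw [Fintype.sum_eq_single x fun z hz => by simp [hz]]
  simp

lemma sum_normSq_pairVec [Fintype ι] {x y : ι} (hxy : x ≠ y) :
    ∑ z, normSq (pairVec x y z) = 1 := by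
  rw [Fintype.sum_eq_add x y hxy fun z hz => by simp [pairVec, hz.1, hz.2]]
  norm_num [pairVec, hxy, hxy.symm]

lemma sum_normSq_subsetState [Fintype ι] {S : Finset ι} (hS : S.Nonempty) :
    ∑ z, normSq (subsetState S z) = 1 := by
  simp [subsetState, apply_ite normSq, Finset.sum_ite_mem, hS.card_pos.ne']

lemma proj_single (x : ι) : proj (Pi.single x (1 : ℂ)) = Matrix.single x x 1 := by
  ext z w
  simp only [proj, Matrix.of_apply, Matrix.single_apply, Pi.single_apply]
  split_ifs <;> grind

lemma proj_pairVec (x y : ι) :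
    proj (pairVec x y) = (2⁻¹ : ℂ) • (Matrix.single x x 1 + Matrix.single x y 1 +
      Matrix.single y x 1 + Matrix.single y y 1) := by
  ext z w
  simp only [proj, pairVec, Matrix.of_apply, Pi.smul_apply, Pi.add_apply, smul_eq_mul, map_mul,
    map_inv₀, conj_ofReal, Matrix.add_apply, Matrix.smul_apply, Matrix.single_apply,
    Pi.single_apply]
  rw [mul_mul_mul_comm, ofReal_inv_sqrt_mul_self zero_le_two, ofReal_ofNat]
  congr 1
  split_ifs <;> grind

lemma proj_subsetState (S : Finset ι) :
    proj (subsetState S) = (#S : ℂ)⁻¹ • ∑ q ∈ S ×ˢ S, Matrix.single q.1 q.2 1 := by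
  ext z w
  simp only [proj, subsetState, Matrix.of_apply, Matrix.smul_apply, Matrix.sum_apply,
    Matrix.single_apply, Finset.sum_product, ite_and, smul_eq_mul]
  simp only [Finset.sum_ite_irrel, Finset.sum_const_zero, Finset.sum_ite_eq', apply_ite conj,
    map_inv₀, conj_ofReal, map_zero]
  by_cases hz : z ∈ S <;> by_cases hw : w ∈ S <;>
    simp [hz, hw, ofReal_inv_sqrt_mul_self (Nat.cast_nonneg _)]

lemma sum_offDiag_add_sum_diag {M : Type*} [AddCommMonoid M] (S : Finset ι) (f : ι × ι → M) :
    ∑ q ∈ S.offDiag, f q + ∑ x ∈ S, f (x, x) = ∑ q ∈ S ×ˢ S, f q := by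
  rw [← Finset.sum_diag, add_comm, ← Finset.sum_union (Finset.disjoint_diag_offDiag S),
    Finset.diag_union_offDiag]

lemma sum_offDiag_proj_pairVec (S : Finset ι) :
    ∑ q ∈ S.offDiag, proj (pairVec q.1 q.2) =
      ((#S : ℂ) - 2) • ∑ x ∈ S, Matrix.single x x 1 + ∑ q ∈ S ×ˢ S, Matrix.single q.1 q.2 1 := by
  have hfull := sum_offDiag_add_sum_diag S fun q => proj (pairVec q.1 q.2)
  simp only [proj_pairVec, ← Finset.smul_sum, Finset.sum_add_distrib] at hfull ⊢
  have h11 : ∑ q ∈ S ×ˢ S, Matrix.single q.1 q.1 (1 : ℂ) = #S • ∑ x ∈ S, Matrix.single x x 1 := by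
    rw [Finset.sum_product, Finset.smul_sum]
    simp
  have h22 : ∑ q ∈ S ×ˢ S, Matrix.single q.2 q.2 (1 : ℂ) = #S • ∑ x ∈ S, Matrix.single x x 1 := by
    rw [Finset.sum_product]
    simp
  have h21 : ∑ q ∈ S ×ˢ S, Matrix.single q.2 q.1 (1 : ℂ) =
      ∑ q ∈ S ×ˢ S, Matrix.single q.1 q.2 1 := by
    rw [Finset.sum_product, Finset.sum_product, Finset.sum_comm]
  rw [h11, h22, h21, ← eq_sub_iff_add_eq] at hfull
  rw [hfull]
  module

lemma proj_subsetState_eq_sum (S : Finset ι) :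
    proj (subsetState S) =
      ∑ x ∈ S, (((2 - #S : ℝ) / #S : ℝ) : ℂ) • proj (Pi.single x 1) +
        ∑ q ∈ S.offDiag, (((#S : ℝ)⁻¹ : ℝ) : ℂ) • proj (pairVec q.1 q.2) := by
  rcases S.eq_empty_or_nonempty with rfl | hS
  · ext; simp [proj, subsetState]
  have hk : (#S : ℂ) ≠ 0 := Nat.cast_ne_zero.mpr hS.card_pos.ne'
  simp only [← Finset.smul_sum, proj_single, sum_offDiag_proj_pairVec, proj_subsetState]
  match_scalars
  · rfl
  · field_simp
    ring

end Vectors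

lemma ncard_stabSet_single (x : V n) : (stabSet (Pi.single x 1)).ncard = 2 ^ n := by
  have : stabSet (Pi.single x (1 : ℂ)) = {0} ×ˢ Set.univ := by
    ext ⟨a, b⟩
    rw [mem_stabSet, Fintype.sum_eq_single x fun w hw => by simp [hw], normSq_sgn_mul]
    by_cases ha : a = 0 <;> simp [ha]
  rw [this, Set.ncard_prod, Set.ncard_singleton, Set.ncard_univ]
  simp

lemma sum_sgn_pairVec (x y a b : V n) :
    ∑ w, sgn (b ⬝ᵥ w) * (pairVec x y w * conj (pairVec x y (w + a))) =
      2⁻¹ * (sgn (b ⬝ᵥ x) + sgn (b ⬝ᵥ y)) *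
        ((if a = 0 then 1 else 0) + (if a = x + y then 1 else 0)) := by
  set δ : V n → ℂ := Pi.single x 1 + Pi.single y 1
  have hδ : ∀ z, conj (δ z) = δ z := fun z => by
    simp only [δ, Pi.add_apply, Pi.single_apply]
    split_ifs <;> simp
  have hc : ((√2 : ℝ) : ℂ)⁻¹ * conj ((√2 : ℝ) : ℂ)⁻¹ = 2⁻¹ := by
    rw [map_inv₀, conj_ofReal, ofReal_inv_sqrt_mul_self zero_le_two, ofReal_ofNat]
  have hterm : ∀ w, sgn (b ⬝ᵥ w) * (pairVec x y w * conj (pairVec x y (w + a))) =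
      2⁻¹ * ((fun w => sgn (b ⬝ᵥ w) * δ (w + a)) w * δ w) := fun w => by
    rw [show pairVec x y = ((√2 : ℝ) : ℂ)⁻¹ • δ from rfl]
    simp only [Pi.smul_apply, smul_eq_mul, map_mul, ← hc, hδ]
    ring
  rw [Fintype.sum_congr _ _ hterm, ← Finset.mul_sum, ← dotProduct, dotProduct_add,
    dotProduct_single, dotProduct_single]
  simp only [δ, Pi.add_apply, Pi.single_apply, add_eq_iff_eq_add, add_eq_left]
  rw [add_comm y x]
  ring

lemma mem_stabSet_pairVec {x y a b : V n} (hxy : x ≠ y) :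
    (a, b) ∈ stabSet (pairVec x y) ↔ (a = 0 ∨ a = x + y) ∧ b ⬝ᵥ (x + y) = 0 := by
  have hd := add_ne_zero_of_ne hxy
  have hind : normSq ((if a = 0 then 1 else 0) + (if a = x + y then 1 else 0) : ℂ) =
      if a = 0 ∨ a = x + y then 1 else 0 := by
    by_cases h0 : a = 0
    · simp [h0, hd.symm]
    · by_cases h1 : a = x + y <;> simp [h0, h1, hd]
  rw [mem_stabSet, sum_sgn_pairVec, map_mul, normSq_half_mul_sgn_add, ← dotProduct_add, hind]
  by_cases ha : a = 0 ∨ a = x + y <;> by_cases hb : b ⬝ᵥ (x + y) = 0 <;> simp only [ha, hb] <;> simp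

lemma ncard_stabSet_pairVec {x y : V n} (hxy : x ≠ y) :
    (stabSet (pairVec x y)).ncard = 2 ^ n := by
  have hd := add_ne_zero_of_ne hxy
  have : stabSet (pairVec x y) = {0, x + y} ×ˢ {b | b ⬝ᵥ (x + y) = 0} := by
    ext ⟨a, b⟩
    exact mem_stabSet_pairVec hxy
  rw [this, Set.ncard_prod, Set.ncard_pair hd.symm, ← two_mul_card_ker_dotProduct hd,
    ← Nat.card_coe_set_eq]
  rfl

lemma isStabState_proj_single (x : V n) : IsStabState (proj (Pi.single x 1)) :=
  ⟨_, sum_normSq_single x, rfl, ncard_stabSet_single x⟩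

lemma isStabState_proj_pairVec {x y : V n} (hxy : x ≠ y) : IsStabState (proj (pairVec x y)) :=
  ⟨_, sum_normSq_pairVec hxy, rfl, ncard_stabSet_pairVec hxy⟩

lemma logRob_le_logb_sum_abs {κ : Type*} [Fintype κ] {ρ : Matrix (V n) (V n) ℂ} (c : κ → ℝ)
    (σ : κ → Matrix (V n) (V n) ℂ) (hσ : ∀ i, IsStabState (σ i))
    (hρ : ρ = ∑ i, (c i : ℂ) • σ i) (hc : 1 ≤ ∑ i, |c i|) :
    logRob ρ ≤ Real.logb 2 (∑ i, |c i|) := by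
  set T := {t : ℝ | ∃ (m : ℕ) (c : Fin m → ℝ) (σ : Fin m → Matrix (V n) (V n) ℂ),
    (∀ i, IsStabState (σ i)) ∧ ρ = ∑ i, (c i : ℂ) • σ i ∧ t = ∑ i, |c i|}
  let e := (Fintype.equivFin κ).symm
  have hmem : ∑ i, |c i| ∈ T :=
    ⟨_, c ∘ e, σ ∘ e, fun i => hσ _, hρ.trans (e.sum_comp _).symm, (e.sum_comp _).symm⟩
  have hnonneg : ∀ t ∈ T, 0 ≤ t := by
    rintro t ⟨m, c, σ, -, -, rfl⟩
    positivity
  have hle : sInf T ≤ ∑ i, |c i| := csInf_le ⟨0, hnonneg⟩ hmem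
  rcases (Real.sInf_nonneg hnonneg).eq_or_lt with h0 | h0
  · rw [logRob, ← h0, Real.logb_zero]
    exact Real.logb_nonneg one_lt_two hc
  · exact Real.logb_le_logb_of_le one_lt_two h0 hle

lemma logRob_proj_subsetState_le {S : Finset (V n)} (hS : 2 ≤ #S) :
    logRob (proj (subsetState S)) ≤ Real.logb 2 (2 * #S - 3) := by
  have hk : (2 : ℝ) ≤ #S := by exact_mod_cast hS
  let c : S ⊕ S.offDiag → ℝ := Sum.elim (fun _ => (2 - #S) / #S) (fun _ => (#S : ℝ)⁻¹)
  let σ : S ⊕ S.offDiag → Matrix (V n) (V n) ℂ :=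
    Sum.elim (fun x => proj (Pi.single x.1 1)) (fun q => proj (pairVec q.1.1 q.1.2))
  have hcost : ∑ i, |c i| = 2 * #S - 3 := by
    simp only [c, Fintype.sum_sum_type, Sum.elim_inl, Sum.elim_inr, Finset.sum_const,
      Finset.card_univ, Fintype.card_coe, Finset.offDiag_card, nsmul_eq_mul,
      Nat.cast_sub (Nat.le_mul_self #S), Nat.cast_mul]
    rw [abs_div, abs_of_nonpos (by linarith), abs_of_pos (by positivity), abs_inv,
      abs_of_pos (by positivity)]
    field_simp
    ring
  rw [← hcost]
  refine logRob_le_logb_sum_abs c σ ?_ ?_ (by linarith)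
  · rintro (⟨x, -⟩ | ⟨q, hq⟩)
    · exact isStabState_proj_single x
    · exact isStabState_proj_pairVec (Finset.mem_offDiag.mp hq).2.2
  · rw [proj_subsetState_eq_sum, Fintype.sum_sum_type]
    simp only [c, σ, Sum.elim_inl, Sum.elim_inr]
    rw [Finset.sum_coe_sort S (fun x => (((2 - #S : ℝ) / #S : ℝ) : ℂ) • proj (Pi.single x 1)),
      Finset.sum_coe_sort S.offDiag fun q => (((#S : ℝ)⁻¹ : ℝ) : ℂ) • proj (pairVec q.1 q.2)]

lemma sum_sgn_subsetState (S : Finset (V n)) (a b : V n) :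
    ∑ w, sgn (b ⬝ᵥ w) * (subsetState S w * conj (subsetState S (w + a))) =
      (#S : ℂ)⁻¹ * ∑ w ∈ S with w + a ∈ S, sgn (b ⬝ᵥ w) := by
  have hterm : ∀ w, sgn (b ⬝ᵥ w) * (subsetState S w * conj (subsetState S (w + a))) =
      if w ∈ S ∧ w + a ∈ S then (#S : ℂ)⁻¹ * sgn (b ⬝ᵥ w) else 0 := fun w => by
    by_cases hw : w ∈ S <;> by_cases hwa : w + a ∈ S <;>
      simp [subsetState, hw, hwa, ofReal_inv_sqrt_mul_self (Nat.cast_nonneg _), mul_comm]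
  rw [Fintype.sum_congr _ _ hterm, ← Finset.sum_filter, Finset.mul_sum]
  congr 1
  ext w
  simp

lemma normSq_inv_mul_sum_sgn_lt_one {ι : Type*} {F : Finset ι} {k : ℕ} (hF : #F < k)
    (f : ι → ZMod 2) : normSq ((k : ℂ)⁻¹ * ∑ w ∈ F, sgn (f w)) < 1 := by
  have hk : (0 : ℝ) < k := by exact_mod_cast (Nat.zero_le _).trans_lt hF
  have hnorm : ‖(k : ℂ)⁻¹ * ∑ w ∈ F, sgn (f w)‖ < 1 := by
    calc ‖(k : ℂ)⁻¹ * ∑ w ∈ F, sgn (f w)‖ ≤ (k : ℝ)⁻¹ * #F := by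
          rw [norm_mul, norm_inv, Complex.norm_natCast]
          gcongr
          refine (norm_sum_le _ _).trans_eq ?_
          simp [sgn]
      _ < 1 := by
          rw [inv_mul_lt_one₀ hk]
          exact_mod_cast hF
  rw [← Complex.sq_norm]
  exact pow_lt_one₀ (norm_nonneg _) hnorm two_ne_zero

noncomputable def hammingBallOne (n : ℕ) : Finset (V n) :=
  insert 0 (univ.image fun j => Pi.single j 1)

lemma mem_hammingBallOne {w : V n} :
    w ∈ hammingBallOne n ↔ w = 0 ∨ ∃ j, Pi.single j 1 = w := by
  simp [hammingBallOne]

lemma zero_mem_hammingBallOne : (0 : V n) ∈ hammingBallOne n := mem_insert_self _ _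

lemma single_one_injective : Function.Injective fun j : Fin n => (Pi.single j 1 : V n) := by
  intro j k h
  by_contra hjk
  simpa [hjk] using congrFun h j

lemma card_hammingBallOne : #(hammingBallOne n) = n + 1 := by
  rw [hammingBallOne, card_insert_of_notMem (by simp),
    card_image_of_injective _ single_one_injective, card_univ, Fintype.card_fin]

lemma single_add_single_notMem_hammingBallOne {j k : Fin n} (hjk : j ≠ k) :
    Pi.single j 1 + Pi.single k 1 ∉ hammingBallOne n := by
  rw [mem_hammingBallOne, not_or, not_exists]
  refine ⟨fun h => by simpa [hjk] using congrFun h j, fun l h => ?_⟩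
  have hj : j = l := by simpa [Pi.single_apply, hjk] using congrFun h j
  have hk : k = l := by simpa [Pi.single_apply, hjk.symm] using congrFun h k
  exact hjk (hj.trans hk.symm)

lemma exists_add_notMem_hammingBallOne (hn : 2 ≤ n) {a : V n} (ha : a ≠ 0) :
    ∃ s ∈ hammingBallOne n, s + a ∉ hammingBallOne n := by
  by_cases haB : a ∈ hammingBallOne n
  · obtain ⟨j, rfl⟩ := (mem_hammingBallOne.mp haB).resolve_left ha
    obtain ⟨k, hkj⟩ := Fintype.exists_ne_of_one_lt_card (by rw [Fintype.card_fin]; omega) j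
    exact ⟨Pi.single k 1, mem_hammingBallOne.mpr (Or.inr ⟨k, rfl⟩),
      single_add_single_notMem_hammingBallOne hkj⟩
  · exact ⟨0, zero_mem_hammingBallOne, by rwa [zero_add]⟩

-- The terms at `0` and at `eⱼ`, where `bⱼ = 1`, cancel.
lemma exists_sum_sgn_hammingBallOne_eq {b : V n} (hb : b ≠ 0) :
    ∃ F : Finset (V n), #F < n + 1 ∧
      ∑ w ∈ hammingBallOne n, sgn (b ⬝ᵥ w) = ∑ w ∈ F, sgn (b ⬝ᵥ w) := by
  obtain ⟨j, hj⟩ := Function.ne_iff.mp hb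
  have hbj : b j = 1 := (zmod_two_cases _).resolve_left hj
  have hj : Pi.single j 1 ∈ (hammingBallOne n).erase 0 :=
    mem_erase.mpr ⟨by simp, mem_hammingBallOne.mpr (Or.inr ⟨j, rfl⟩)⟩
  refine ⟨((hammingBallOne n).erase 0).erase (Pi.single j 1), ?_, ?_⟩
  · rw [card_erase_of_mem hj, card_erase_of_mem zero_mem_hammingBallOne, card_hammingBallOne]
    omega
  · rw [← add_sum_erase _ _ zero_mem_hammingBallOne, ← add_sum_erase _ _ hj, dotProduct_zero,
      dotProduct_single, hbj, mul_one, sgn_zero, sgn_one]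
    ring

lemma stabSet_subsetState_hammingBallOne (hn : 2 ≤ n) :
    stabSet (subsetState (hammingBallOne n)) = {(0, 0)} := by
  refine Set.eq_singleton_iff_unique_mem.mpr
    ⟨zero_mem_stabSet (sum_normSq_subsetState ⟨0, zero_mem_hammingBallOne⟩), ?_⟩
  rintro ⟨a, b⟩ hab
  rw [mem_stabSet, sum_sgn_subsetState, card_hammingBallOne] at hab
  by_contra hne
  suffices ∃ F : Finset (V n), #F < n + 1 ∧
      ∑ w ∈ hammingBallOne n with w + a ∈ hammingBallOne n, sgn (b ⬝ᵥ w) =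
        ∑ w ∈ F, sgn (b ⬝ᵥ w) by
    obtain ⟨F, hF, hsum⟩ := this
    rw [hsum] at hab
    exact (normSq_inv_mul_sum_sgn_lt_one hF _).ne hab
  by_cases ha : a = 0
  · subst ha
    rw [filter_true_of_mem fun w hw => by rwa [add_zero]]
    exact exists_sum_sgn_hammingBallOne_eq fun hb => hne (by rw [hb])
  · obtain ⟨s, hs, hsa⟩ := exists_add_notMem_hammingBallOne hn ha
    refine ⟨_, ?_, rfl⟩
    calc #{w ∈ hammingBallOne n | w + a ∈ hammingBallOne n}
        ≤ #((hammingBallOne n).erase s) := card_le_card fun w hw =>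
          mem_erase.mpr ⟨by rintro rfl; exact hsa (mem_filter.mp hw).2, (mem_filter.mp hw).1⟩
      _ < n + 1 := by rw [card_erase_of_mem hs, card_hammingBallOne]; omega

lemma nullity_subsetState_hammingBallOne (hn : 2 ≤ n) :
    nullity (subsetState (hammingBallOne n)) = n := by
  rw [nullity, ← stabSet, stabSet_subsetState_hammingBallOne hn, Set.ncard_singleton,
    Nat.cast_one, Real.logb_one, sub_zero]

lemma exists_mul_logb_lt (a : ℝ) : ∃ n : ℕ, 2 ≤ n ∧ a * Real.logb 2 (2 * n - 1) < n := by
  obtain ⟨N, hN⟩ := Filter.eventually_atTop.mp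
    ((Real.isLittleO_log_id_atTop.const_mul_left (a / Real.log 2)).bound
      (by norm_num : (0 : ℝ) < 1 / 4))
  refine ⟨max 2 ⌈N⌉₊, le_max_left _ _, ?_⟩
  set m := max 2 ⌈N⌉₊
  have hm : (2 : ℝ) ≤ m := by exact_mod_cast le_max_left 2 ⌈N⌉₊
  have hNm : N ≤ 2 * m - 1 := by
    have : (⌈N⌉₊ : ℝ) ≤ m := by exact_mod_cast le_max_right 2 ⌈N⌉₊
    linarith [Nat.le_ceil N]
  have hbound := hN _ hNm
  rw [Real.norm_eq_abs, Real.norm_eq_abs, id, abs_of_pos (a := 2 * (m : ℝ) - 1) (by linarith)]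
    at hbound
  calc a * Real.logb 2 (2 * m - 1) = a / Real.log 2 * Real.log (2 * m - 1) := by
        rw [Real.logb]; ring
    _ ≤ 1 / 4 * (2 * m - 1) := (le_abs_self _).trans hbound
    _ < m := by linarith

end Magic

open Finset Magic

/-- there is no constant a > 0 with ν(ψ) ≤ a·ℛ(ψ) for all pure states
on any number of qubits. -/
theorem no_nullity_robustness_bound :
    ¬ ∃ a : ℝ, 0 < a ∧ ∀ (n : ℕ) (u : (Fin n → ZMod 2) → ℂ),
      (∑ x, Complex.normSq (u x) = 1) → nullity u ≤ a * logRob (proj u) := by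
  rintro ⟨a, ha, hbound⟩
  obtain ⟨n, hn, hlt⟩ := exists_mul_logb_lt a
  have hν := hbound n _ (sum_normSq_subsetState ⟨0, zero_mem_hammingBallOne⟩)
  rw [nullity_subsetState_hammingBallOne hn] at hν
  have hR := logRob_proj_subsetState_le (S := hammingBallOne n) (by rw [card_hammingBallOne]; omega)
  rw [card_hammingBallOne, Nat.cast_succ, show 2 * ((n : ℝ) + 1) - 3 = 2 * n - 1 by ring] at hR
  linarith [mul_le_mul_of_nonneg_left hR ha.le]
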